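/- Let n ≥ 1 and u, v : {1,…,n} → ℝ satisfy u_i ≠ 0 for all i ∈ {1,…,n}, u_{i+1} v_i − u_i v_{i+1} ≠ 0 for all 1 ≤ i ≤ n−1, and u_n v_n ≠ 0. Then the inverse of the factorizable matrix Q(u,v) is symmetric tridiagonal: (Q⁻¹)_{11} = δ_1, (Q⁻¹)_{ii} = δ_i + δ_{i−1} θ_i² for 2 ≤ i ≤ n, (Q⁻¹)_{i,i+1} = (Q⁻¹)_{i+1,i} = −δ_i θ_{i+1} for 1 ≤ i ≤ n−1, and (Q⁻¹)_{ij} = 0 whenever |i − j| ≥ 2. -/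

import Mathlib

/-
Check `Q * T = 1` column by column, `T` being the claimed tridiagonal inverse. Column `k` of `T`
is supported on `{k-1, k, k+1}`, where row `i < k` of `Q` equals `u i • v` and row `i > k` equals
`v i • u`. So it suffices that this column is orthogonal to `v` (for `k > 0`) and to `u`
(for `k < n-1`), and pairs with row `k` of `Q` to `1`. Each of these sums splits into the
contribution of the block of `T` on `{k, k+1}` (weight `δ_k`) and that on `{k-1, k}` (weight
`δ_{k-1}`); against `u` both vanish, against `v` they are `1/u_k` and `-1/u_k`.
-/

open Matrix BigOperators

/-- The factorizable matrix `Q(u,v)`. -/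
noncomputable def facQ (n : ℕ) (u v : Fin n → ℝ) : Matrix (Fin n) (Fin n) ℝ :=
  Matrix.of fun i j => if i ≤ j then u i * v j else u j * v i

/-- `δ_i = u_{i+1}/(u_i (u_{i+1} v_i − u_i v_{i+1}))` for `i ≤ n-1` and `δ_n = 1/(u_n v_n)`. -/
noncomputable def facDelta (n : ℕ) (u v : Fin n → ℝ) (i : Fin n) : ℝ :=
  if h : (i : ℕ) + 1 < n then
    u ⟨(i : ℕ) + 1, h⟩ / (u i * (u ⟨(i : ℕ) + 1, h⟩ * v i - u i * v ⟨(i : ℕ) + 1, h⟩))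
  else 1 / (u i * v i)

section SymmTridiag

variable {R : Type*} [Semiring R] {n : ℕ}

def symmTridiag (d e : Fin n → R) : Matrix (Fin n) (Fin n) R :=
  Matrix.of fun i j =>
    (if i = j then d i else 0) + (if (i : ℕ) + 1 = j then e i else 0) +
      (if (j : ℕ) + 1 = i then e j else 0)

variable (d e : Fin n → R)

lemma symmTridiag_apply_self (i : Fin n) : symmTridiag d e i i = d i := by
  simp [symmTridiag]

lemma symmTridiag_apply_succ (i : Fin n) (h : (i : ℕ) + 1 < n) :
    symmTridiag d e i ⟨i + 1, h⟩ = e i := by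
  simp [symmTridiag, Fin.ext_iff, Nat.ne_of_gt]

lemma symmTridiag_apply_succ_left (i : Fin n) (h : (i : ℕ) + 1 < n) :
    symmTridiag d e ⟨i + 1, h⟩ i = e i := by
  simp [symmTridiag, Fin.ext_iff, Nat.ne_of_gt]

lemma symmTridiag_apply_eq_zero {i j : Fin n} (hij : (i : ℕ) + 2 ≤ j ∨ (j : ℕ) + 2 ≤ i) :
    symmTridiag d e i j = 0 := by
  simp only [symmTridiag, of_apply, Fin.ext_iff]
  rw [if_neg (by omega), if_neg (by omega), if_neg (by omega), add_zero, add_zero]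

lemma sum_mul_symmTridiag_col (f : Fin n → R) (k : Fin n) :
    ∑ j, f j * symmTridiag d e j k =
      f k * d k + (if h : 0 < (k : ℕ) then f ⟨k - 1, by omega⟩ * e ⟨k - 1, by omega⟩ else 0) +
        (if h : (k : ℕ) + 1 < n then f ⟨k + 1, h⟩ * e k else 0) := by
  simp only [symmTridiag, of_apply, mul_add, mul_ite, mul_zero, Finset.sum_add_distrib]
  congr 1
  · congr 1
    · simp
    · split_ifs with hk
      · rw [Finset.sum_eq_single_of_mem ⟨k - 1, by omega⟩ (Finset.mem_univ _)]
        · rw [if_pos (by simp; omega)]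
        · intro j _ hj
          exact if_neg fun hj' => hj (Fin.ext (by simp; omega))
      · exact Finset.sum_eq_zero fun j _ => if_neg (by omega)
  · split_ifs with hk
    · rw [Finset.sum_eq_single_of_mem ⟨k + 1, hk⟩ (Finset.mem_univ _)]
      · rw [if_pos rfl]
      · intro j _ hj
        exact if_neg fun hj' => hj (Fin.ext (by simp; omega))
    · exact Finset.sum_eq_zero fun j _ => if_neg (by omega)

end SymmTridiag

section Factorizable

variable {n : ℕ} (u v : Fin n → ℝ)

lemma facQ_apply_of_le {i j : Fin n} (h : i ≤ j) : facQ n u v i j = u i * v j := by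
  simp [facQ, h]

lemma facQ_apply_of_ge {i j : Fin n} (h : j ≤ i) : facQ n u v i j = u j * v i := by
  rcases h.lt_or_eq with h | rfl
  · simp [facQ, h.not_ge]
  · simp [facQ]

lemma facQ_mul_apply_of_forall_le (B : Matrix (Fin n) (Fin n) ℝ) {i k : Fin n}
    (hB : ∀ j, B j k ≠ 0 → i ≤ j) :
    (facQ n u v * B) i k = u i * ∑ j, v j * B j k := by
  rw [mul_apply, Finset.mul_sum]
  refine Finset.sum_congr rfl fun j _ => ?_
  by_cases hj : B j k = 0
  · simp [hj]
  · rw [facQ_apply_of_le u v (hB j hj), mul_assoc]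

lemma facQ_mul_apply_of_forall_ge (B : Matrix (Fin n) (Fin n) ℝ) {i k : Fin n}
    (hB : ∀ j, B j k ≠ 0 → j ≤ i) :
    (facQ n u v * B) i k = v i * ∑ j, u j * B j k := by
  rw [mul_apply, Finset.mul_sum]
  refine Finset.sum_congr rfl fun j _ => ?_
  by_cases hj : B j k = 0
  · simp [hj]
  · rw [facQ_apply_of_ge u v (hB j hj)]
    ring

-- The value at the last index is never read by `symmTridiag`.
noncomputable def facOffDiag (i : Fin n) : ℝ :=
  if h : (i : ℕ) + 1 < n then -(facDelta n u v i * (u i / u ⟨i + 1, h⟩)) else 0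

noncomputable def facDiag (i : Fin n) : ℝ :=
  facDelta n u v i +
    if h : 0 < (i : ℕ) then
      facDelta n u v ⟨i - 1, by omega⟩ * (u ⟨i - 1, by omega⟩ / u i) ^ 2 else 0

noncomputable def facInv : Matrix (Fin n) (Fin n) ℝ :=
  symmTridiag (facDiag u v) (facOffDiag u v)

lemma sum_mul_facInv_col (f : Fin n → ℝ) (k : Fin n) :
    ∑ j, f j * facInv u v j k =
      (f k * facDelta n u v k +
          if h : (k : ℕ) + 1 < n then f ⟨k + 1, h⟩ * facOffDiag u v k else 0) +
        if h : 0 < (k : ℕ) then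
          f k * facDelta n u v ⟨k - 1, by omega⟩ * (u ⟨k - 1, by omega⟩ / u k) ^ 2 +
            f ⟨k - 1, by omega⟩ * facOffDiag u v ⟨k - 1, by omega⟩
        else 0 := by
  rw [facInv, sum_mul_symmTridiag_col, facDiag]
  split_ifs <;> ring

lemma u_mul_facDelta_add_u_succ_mul_facOffDiag (i : Fin n) (h : (i : ℕ) + 1 < n)
    (hu : u ⟨i + 1, h⟩ ≠ 0) :
    u i * facDelta n u v i + u ⟨i + 1, h⟩ * facOffDiag u v i = 0 := by
  rw [facOffDiag, dif_pos h]
  field_simp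
  ring

lemma u_succ_mul_facDelta_add_u_mul_facOffDiag (i : Fin n) (h : (i : ℕ) + 1 < n)
    (hu : u ⟨i + 1, h⟩ ≠ 0) :
    u ⟨i + 1, h⟩ * facDelta n u v i * (u i / u ⟨i + 1, h⟩) ^ 2 + u i * facOffDiag u v i = 0 := by
  rw [facOffDiag, dif_pos h]
  field_simp
  ring

lemma v_mul_facDelta_add_v_succ_mul_facOffDiag (i : Fin n) (h : (i : ℕ) + 1 < n)
    (hu : u ⟨i + 1, h⟩ ≠ 0) (hw : u ⟨i + 1, h⟩ * v i - u i * v ⟨i + 1, h⟩ ≠ 0) :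
    v i * facDelta n u v i + v ⟨i + 1, h⟩ * facOffDiag u v i = 1 / u i := by
  rw [facOffDiag, dif_pos h, facDelta, dif_pos h]
  set w := u ⟨i + 1, h⟩ * v i - u i * v ⟨i + 1, h⟩ with hw_def
  field_simp
  linear_combination hw_def

lemma v_succ_mul_facDelta_add_v_mul_facOffDiag (i : Fin n) (h : (i : ℕ) + 1 < n)
    (hu : u i ≠ 0) (hu' : u ⟨i + 1, h⟩ ≠ 0)
    (hw : u ⟨i + 1, h⟩ * v i - u i * v ⟨i + 1, h⟩ ≠ 0) :
    v ⟨i + 1, h⟩ * facDelta n u v i * (u i / u ⟨i + 1, h⟩) ^ 2 + v i * facOffDiag u v i =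
      -(1 / u ⟨i + 1, h⟩) := by
  rw [facOffDiag, dif_pos h, facDelta, dif_pos h]
  set w := u ⟨i + 1, h⟩ * v i - u i * v ⟨i + 1, h⟩ with hw_def
  field_simp
  linear_combination hw_def

lemma v_mul_facDelta_of_last (i : Fin n) (h : ¬(i : ℕ) + 1 < n) (huv : u i * v i ≠ 0) :
    v i * facDelta n u v i = 1 / u i := by
  rw [facDelta, dif_neg h]
  field_simp [right_ne_zero_of_mul huv]

end Factorizable

lemma Fin.val_eq_zero_or_exists_eq_mk_add_one {n : ℕ} (k : Fin n) :
    (k : ℕ) = 0 ∨ ∃ (i : Fin n) (hi : (i : ℕ) + 1 < n), k = ⟨i + 1, hi⟩ := by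
  rcases Nat.eq_zero_or_pos k with hk | hk
  · exact .inl hk
  · exact .inr ⟨⟨k - 1, by omega⟩, by simp; omega, Fin.ext (by simp; omega)⟩

section Inverse

variable {n : ℕ} {u v : Fin n → ℝ}

lemma sum_u_mul_facInv_col (hu : ∀ i, u i ≠ 0) (k : Fin n) (hk : (k : ℕ) + 1 < n) :
    ∑ j, u j * facInv u v j k = 0 := by
  rw [sum_mul_facInv_col, dif_pos hk, u_mul_facDelta_add_u_succ_mul_facOffDiag u v k hk (hu _),
    zero_add]
  rcases k.val_eq_zero_or_exists_eq_mk_add_one with hk0 | ⟨i, hi, rfl⟩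
  · simp [hk0]
  · simp only [Nat.add_sub_cancel, Fin.eta, dif_pos i.val.succ_pos]
    exact u_succ_mul_facDelta_add_u_mul_facOffDiag u v i hi (hu _)

lemma v_mul_facDelta_add_facOffDiag (hu : ∀ i, u i ≠ 0)
    (hw : ∀ (i : Fin n) (h : (i : ℕ) + 1 < n), u ⟨i + 1, h⟩ * v i - u i * v ⟨i + 1, h⟩ ≠ 0)
    (hlast : ∀ i : Fin n, (i : ℕ) + 1 = n → u i * v i ≠ 0) (k : Fin n) :
    (v k * facDelta n u v k + if h : (k : ℕ) + 1 < n then v ⟨k + 1, h⟩ * facOffDiag u v k else 0) =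
      1 / u k := by
  split_ifs with hk
  · exact v_mul_facDelta_add_v_succ_mul_facOffDiag u v k hk (hu _) (hw k hk)
  · rw [add_zero, v_mul_facDelta_of_last u v k hk (hlast k (by omega))]

lemma sum_v_mul_facInv_col (hu : ∀ i, u i ≠ 0)
    (hw : ∀ (i : Fin n) (h : (i : ℕ) + 1 < n), u ⟨i + 1, h⟩ * v i - u i * v ⟨i + 1, h⟩ ≠ 0)
    (hlast : ∀ i : Fin n, (i : ℕ) + 1 = n → u i * v i ≠ 0) (k : Fin n) (hk : 0 < (k : ℕ)) :
    ∑ j, v j * facInv u v j k = 0 := by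
  rw [sum_mul_facInv_col, v_mul_facDelta_add_facOffDiag hu hw hlast]
  obtain ⟨i, hi, rfl⟩ := (k.val_eq_zero_or_exists_eq_mk_add_one).resolve_left hk.ne'
  simp only [Nat.add_sub_cancel, Fin.eta, dif_pos i.val.succ_pos]
  rw [v_succ_mul_facDelta_add_v_mul_facOffDiag u v i hi (hu _) (hu _) (hw i hi), add_neg_cancel]

lemma sum_facQ_mul_facInv_diag (hu : ∀ i, u i ≠ 0)
    (hw : ∀ (i : Fin n) (h : (i : ℕ) + 1 < n), u ⟨i + 1, h⟩ * v i - u i * v ⟨i + 1, h⟩ ≠ 0)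
    (hlast : ∀ i : Fin n, (i : ℕ) + 1 = n → u i * v i ≠ 0) (k : Fin n) :
    ∑ j, facQ n u v k j * facInv u v j k = 1 := by
  have hright : (facQ n u v k k * facDelta n u v k +
      if h : (k : ℕ) + 1 < n then facQ n u v k ⟨k + 1, h⟩ * facOffDiag u v k else 0) = 1 :=
    calc _ = u k * (v k * facDelta n u v k +
          if h : (k : ℕ) + 1 < n then v ⟨k + 1, h⟩ * facOffDiag u v k else 0) := by
          rw [facQ_apply_of_le u v le_rfl]
          split_ifs with hk
          · rw [facQ_apply_of_le u v (Fin.le_iff_val_le_val.2 (by simp))]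
            ring
          · ring
      _ = 1 := by rw [v_mul_facDelta_add_facOffDiag hu hw hlast, mul_one_div_cancel (hu k)]
  rw [sum_mul_facInv_col, hright]
  rcases k.val_eq_zero_or_exists_eq_mk_add_one with hk0 | ⟨i, hi, rfl⟩
  · rw [dif_neg (by omega), add_zero]
  · simp only [Nat.add_sub_cancel, Fin.eta, dif_pos i.val.succ_pos]
    rw [facQ_apply_of_le u v le_rfl, facQ_apply_of_ge u v (Fin.le_iff_val_le_val.2 (by simp))]
    linear_combination v ⟨i + 1, hi⟩ * u_succ_mul_facDelta_add_u_mul_facOffDiag u v i hi (hu _)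

lemma facQ_mul_facInv (hu : ∀ i, u i ≠ 0)
    (hw : ∀ (i : Fin n) (h : (i : ℕ) + 1 < n), u ⟨i + 1, h⟩ * v i - u i * v ⟨i + 1, h⟩ ≠ 0)
    (hlast : ∀ i : Fin n, (i : ℕ) + 1 = n → u i * v i ≠ 0) :
    facQ n u v * facInv u v = 1 := by
  ext i k
  rcases lt_trichotomy i k with hik | rfl | hik
  · rw [facQ_mul_apply_of_forall_le u v _ fun j hj => ?_, sum_v_mul_facInv_col hu hw hlast k
      (by omega), mul_zero, one_apply_ne hik.ne]
    by_contra! hji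
    exact hj (symmTridiag_apply_eq_zero _ _ (.inl (by omega)))
  · rw [mul_apply, sum_facQ_mul_facInv_diag hu hw hlast, one_apply_eq]
  · rw [facQ_mul_apply_of_forall_ge u v _ fun j hj => ?_, sum_u_mul_facInv_col hu k
      (by omega), mul_zero, one_apply_ne hik.ne']
    by_contra! hji
    exact hj (symmTridiag_apply_eq_zero _ _ (.inr (by omega)))

end Inverse

theorem stmt_2 (n : ℕ) (hn : 1 ≤ n) (u v : Fin n → ℝ)
    (hu : ∀ i : Fin n, u i ≠ 0)
    (h2 : ∀ (i : Fin n) (h : (i : ℕ) + 1 < n),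
      u ⟨(i : ℕ) + 1, h⟩ * v i - u i * v ⟨(i : ℕ) + 1, h⟩ ≠ 0)
    (h3 : u ⟨n - 1, by omega⟩ * v ⟨n - 1, by omega⟩ ≠ 0) :
    ((facQ n u v)⁻¹ ⟨0, by omega⟩ ⟨0, by omega⟩ = facDelta n u v ⟨0, by omega⟩) ∧
    (∀ i : Fin n, 0 < (i : ℕ) →
      (facQ n u v)⁻¹ i i =
        facDelta n u v i +
          facDelta n u v ⟨(i : ℕ) - 1, lt_of_le_of_lt (Nat.sub_le _ _) i.isLt⟩ *
            (u ⟨(i : ℕ) - 1, lt_of_le_of_lt (Nat.sub_le _ _) i.isLt⟩ / u i) ^ 2) ∧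
    (∀ (i : Fin n) (h : (i : ℕ) + 1 < n),
      (facQ n u v)⁻¹ i ⟨(i : ℕ) + 1, h⟩ = -(facDelta n u v i * (u i / u ⟨(i : ℕ) + 1, h⟩)) ∧
      (facQ n u v)⁻¹ ⟨(i : ℕ) + 1, h⟩ i = -(facDelta n u v i * (u i / u ⟨(i : ℕ) + 1, h⟩))) ∧
    (∀ i j : Fin n, ((i : ℕ) + 2 ≤ (j : ℕ) ∨ (j : ℕ) + 2 ≤ (i : ℕ)) →
      (facQ n u v)⁻¹ i j = 0) := by
  have hlast : ∀ i : Fin n, (i : ℕ) + 1 = n → u i * v i ≠ 0 := fun i hi => by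
    rwa [show i = ⟨n - 1, by omega⟩ from Fin.ext (by simp; omega)]
  rw [inv_eq_right_inv (facQ_mul_facInv hu h2 hlast)]
  refine ⟨?_, fun i hi => ?_, fun i h => ⟨?_, ?_⟩, fun i j hij => ?_⟩
  · simp [facInv, symmTridiag_apply_self, facDiag]
  · rw [facInv, symmTridiag_apply_self, facDiag, dif_pos hi]
  · rw [facInv, symmTridiag_apply_succ, facOffDiag, dif_pos h]
  · rw [facInv, symmTridiag_apply_succ_left, facOffDiag, dif_pos h]
  · exact symmTridiag_apply_eq_zero _ _ hij
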